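/- Let A = A₁ ⟨α⟩ A₀ B where B is either empty or starts with ⟨α⟩, and A₁, A₀ are worms with all modalities > α. If GLP_Λ proves A₁ → ⟨α+1⟩A₀, then GLP_Λ proves A ↔ A₁B. -/

import Mathlib

inductive Formula (L : Type) : Type where
  | bot : Formula L
  | var : Nat → Formula L
  | imp : Formula L → Formula L → Formula L
  | box : L → Formula L → Formula L

namespace Formula

variable {L : Type}

def neg (φ : Formula L) : Formula L := imp φ bot
def top : Formula L := neg bot
def and (φ ψ : Formula L) : Formula L := neg (imp φ ψ.neg)
def or (φ ψ : Formula L) : Formula L := imp φ.neg ψ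
def iff (φ ψ : Formula L) : Formula L := (imp φ ψ).and (imp ψ φ)
def dia (α : L) (φ : Formula L) : Formula L := neg (box α φ.neg)

end Formula

open Formula

/-- Provability in the polymodal provability logic `GLP_Λ` over a linear order. -/
inductive GLP {L : Type} [LinearOrder L] : Formula L → Prop where
  | k1 : ∀ φ ψ : Formula L, GLP (φ.imp (ψ.imp φ))
  | k2 : ∀ φ ψ χ : Formula L, GLP ((φ.imp (ψ.imp χ)).imp ((φ.imp ψ).imp (φ.imp χ)))
  | k3 : ∀ φ ψ : Formula L, GLP ((φ.neg.imp ψ.neg).imp (ψ.imp φ))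
  | dist : ∀ (α : L) (φ ψ : Formula L), GLP ((Formula.box α (φ.imp ψ)).imp ((Formula.box α φ).imp (Formula.box α ψ)))
  | lob : ∀ (α : L) (φ : Formula L), GLP ((Formula.box α ((Formula.box α φ).imp φ)).imp (Formula.box α φ))
  | trans : ∀ (α β : L) (φ : Formula L), α ≤ β → GLP ((Formula.box α φ).imp (Formula.box β (Formula.box α φ)))
  | negintro : ∀ (α β : L) (φ : Formula L), α < β → GLP ((dia α φ).imp (Formula.box β (dia α φ)))
  | mono : ∀ (α β : L) (φ : Formula L), α ≤ β → GLP ((Formula.box α φ).imp (Formula.box β φ))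
  | mp : ∀ φ ψ : Formula L, GLP (φ.imp ψ) → GLP φ → GLP ψ
  | nec : ∀ (α : L) (φ : Formula L), GLP φ → GLP (Formula.box α φ)

/-- The worm (iterated consistency statement) associated to a list of modalities. -/
def worm {L : Type} : List L → Formula L
  | [] => Formula.top
  | α :: w => Formula.dia α (worm w)

/-- `Lt α A B` iff `GLP ⊢ B → ⟨α⟩A`. -/
def Lt {L : Type} [LinearOrder L] (α : L) (A B : List L) : Prop :=
  GLP ((worm B).imp (Formula.dia α (worm A)))

def Le {L : Type} [LinearOrder L] (α : L) (A B : List L) : Prop :=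
  Lt α A B ∨ A = B


/-! Every modality of `A₁` and `A₀` exceeds the first modality of `B`, so the worm `B` is
preserved by the corresponding boxes (axiom `negintro`) and `WB ↔ W ∧ B` for `W = A₁, A₀`.
As `⟨α⟩A₀B → B` by transitivity, `A₁⟨α⟩A₀B → A₁B`; conversely
`A₁B → A₁ ∧ ⟨α+1⟩A₀ ∧ [α+1]B → A₁ ∧ ⟨α+1⟩(A₀ ∧ B) → A₁ ∧ ⟨α⟩A₀B → A₁⟨α⟩A₀B`.
If `α` is maximal, `A₁` is empty and the hypothesis makes `⟨α⟩A₀` provable, which Löb's axiom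
refutes. -/

namespace GLP

variable {L : Type} [LinearOrder L] {φ ψ χ : Formula L}

theorem mp' (hφψ : GLP (φ.imp ψ)) (hφ : GLP φ) : GLP ψ :=
  mp φ ψ hφψ hφ

theorem imp_self (φ : Formula L) : GLP (φ.imp φ) :=
  ((k2 φ (φ.imp φ) φ).mp' (k1 φ (φ.imp φ))).mp' (k1 φ φ)

theorem imp_mono_right (h : GLP (ψ.imp χ)) (φ : Formula L) :
    GLP ((φ.imp ψ).imp (φ.imp χ)) :=
  (k2 φ ψ χ).mp' ((k1 (ψ.imp χ) φ).mp' h)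

theorem imp_trans (hφψ : GLP (φ.imp ψ)) (hψχ : GLP (ψ.imp χ)) : GLP (φ.imp χ) :=
  (imp_mono_right hψχ φ).mp' hφψ

theorem imp_mp (hψχ : GLP (φ.imp (ψ.imp χ))) (hψ : GLP (φ.imp ψ)) : GLP (φ.imp χ) :=
  ((k2 φ ψ χ).mp' hψχ).mp' hψ

theorem imp_comm (h : GLP (φ.imp (ψ.imp χ))) : GLP (ψ.imp (φ.imp χ)) :=
  imp_trans (k1 ψ φ) ((k2 φ ψ χ).mp' h)

theorem imp_imp_imp_trans (φ ψ χ : Formula L) :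
    GLP ((φ.imp ψ).imp ((ψ.imp χ).imp (φ.imp χ))) :=
  imp_comm (imp_trans (k1 (ψ.imp χ) φ) (k2 φ ψ χ))

theorem imp_swap (φ ψ χ : Formula L) :
    GLP ((φ.imp (ψ.imp χ)).imp (ψ.imp (φ.imp χ))) :=
  imp_trans (k2 φ ψ χ) ((imp_imp_imp_trans ψ (φ.imp ψ) (φ.imp χ)).mp' (k1 ψ φ))

theorem top_intro : GLP (Formula.top : Formula L) :=
  imp_self Formula.bot

theorem imp_top (φ : Formula L) : GLP (φ.imp Formula.top) :=
  (k1 Formula.top φ).mp' top_intro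

theorem bot_imp (φ : Formula L) : GLP (Formula.bot.imp φ) :=
  (k3 φ Formula.bot).mp' (imp_top φ.neg)

theorem not_not_intro (φ : Formula L) : GLP (φ.imp φ.neg.neg) :=
  imp_comm (imp_self φ.neg)

theorem not_not_elim (φ : Formula L) : GLP (φ.neg.neg.imp φ) :=
  (k3 φ φ.neg.neg).mp' (not_not_intro φ.neg)

theorem mt (h : GLP (φ.imp ψ)) : GLP (ψ.neg.imp φ.neg) :=
  imp_comm (imp_trans h (not_not_intro ψ))

theorem and_left (φ ψ : Formula L) : GLP ((φ.and ψ).imp φ) :=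
  imp_trans (mt (imp_mono_right (bot_imp ψ.neg) φ)) (not_not_elim φ)

theorem and_right (φ ψ : Formula L) : GLP ((φ.and ψ).imp ψ) :=
  imp_trans (mt (k1 ψ.neg φ)) (not_not_elim ψ)

theorem imp_imp_and (φ ψ : Formula L) : GLP (φ.imp (ψ.imp (φ.and ψ))) :=
  imp_trans (imp_comm (imp_self (φ.imp ψ.neg))) (imp_swap (φ.imp ψ.neg) ψ Formula.bot)

theorem imp_and (hφ : GLP (χ.imp φ)) (hψ : GLP (χ.imp ψ)) : GLP (χ.imp (φ.and ψ)) :=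
  imp_mp (imp_trans hφ (imp_imp_and φ ψ)) hψ

theorem and_imp (h : GLP (φ.imp (ψ.imp χ))) : GLP ((φ.and ψ).imp χ) :=
  imp_mp (imp_trans (and_left φ ψ) h) (and_right φ ψ)

theorem iff_intro (hφψ : GLP (φ.imp ψ)) (hψφ : GLP (ψ.imp φ)) : GLP (φ.iff ψ) :=
  ((imp_imp_and _ _).mp' hφψ).mp' hψφ

theorem box_mono (h : GLP (φ.imp ψ)) (β : L) : GLP ((box β φ).imp (box β ψ)) :=
  (dist β φ ψ).mp' (nec β _ h)

theorem dia_mono (h : GLP (φ.imp ψ)) (β : L) : GLP ((dia β φ).imp (dia β ψ)) :=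
  mt (box_mono (mt h) β)

theorem dia_anti {α β : L} (hαβ : α ≤ β) (φ : Formula L) :
    GLP ((dia β φ).imp (dia α φ)) :=
  mt (mono α β φ.neg hαβ)

theorem dia_dia (α : L) (φ : Formula L) : GLP ((dia α (dia α φ)).imp (dia α φ)) :=
  mt (imp_trans (trans α α φ.neg le_rfl) (box_mono (not_not_intro _) α))

theorem dia_and_of_imp_box {β : L} (hψ : GLP (ψ.imp (box β ψ))) (φ : Formula L) :
    GLP (((dia β φ).and ψ).imp (dia β (φ.and ψ))) := by
  have hneg : GLP ((φ.and ψ).neg.imp (ψ.imp φ.neg)) :=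
    imp_trans (not_not_elim (φ.imp ψ.neg)) (imp_swap φ ψ Formula.bot)
  have hbox : GLP ((box β ψ).imp ((dia β φ).imp (dia β (φ.and ψ)))) :=
    imp_trans (imp_comm (imp_trans (box_mono hneg β) (dist β ψ φ.neg)))
      (imp_imp_imp_trans _ _ Formula.bot)
  exact and_imp (imp_comm (imp_trans hψ hbox))

theorem of_provable_dia {γ : L} (h : GLP (dia γ φ)) (ψ : Formula L) : GLP ψ := by
  have hnot : GLP ((box γ Formula.bot).imp Formula.bot) :=
    imp_trans (box_mono (bot_imp φ.neg) γ) h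
  exact (bot_imp ψ).mp' (hnot.mp' ((lob γ Formula.bot).mp' (nec γ _ hnot)))

end GLP

section Worms

open GLP

variable {L : Type} [LinearOrder L]

theorem worm_append_mono {v v' : List L} (h : GLP ((worm v).imp (worm v'))) (u : List L) :
    GLP ((worm (u ++ v)).imp (worm (u ++ v'))) := by
  induction u with
  | nil => exact h
  | cons γ u ih => exact dia_mono ih γ

theorem worm_append_imp_left (u v : List L) : GLP ((worm (u ++ v)).imp (worm u)) := by
  simpa only [List.append_nil] using worm_append_mono (v' := []) (imp_top (worm v)) u

theorem worm_imp_box_worm {B : List L} {γ : L} (hB : ∀ β ∈ B.head?, β < γ) :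
    GLP ((worm B).imp (box γ (worm B))) := by
  cases B with
  | nil => exact (k1 _ _).mp' (nec γ _ top_intro)
  | cons β C => exact negintro β γ (worm C) (hB β rfl)

theorem worm_append_imp_right {w B : List L} (hB : ∀ β ∈ B.head?, ∀ γ ∈ w, β ≤ γ) :
    GLP ((worm (w ++ B)).imp (worm B)) := by
  cases B with
  | nil => exact imp_top _
  | cons β C =>
    induction w with
    | nil => exact imp_self _
    | cons γ w ih =>
      have hβγ : β ≤ γ := hB β rfl γ List.mem_cons_self
      exact imp_trans (dia_mono (ih fun β' hβ' γ' hγ' => hB β' hβ' γ' (.tail γ hγ')) γ)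
        (imp_trans (dia_anti hβγ _) (dia_dia β _))

theorem and_imp_worm_append {w B : List L} (hB : ∀ β ∈ B.head?, ∀ γ ∈ w, β < γ) :
    GLP (((worm w).and (worm B)).imp (worm (w ++ B))) := by
  induction w with
  | nil => exact and_right _ _
  | cons γ w ih =>
    have hbox := worm_imp_box_worm fun β hβ => hB β hβ γ List.mem_cons_self
    exact imp_trans (dia_and_of_imp_box hbox (worm w))
      (dia_mono (ih fun β hβ γ' hγ' => hB β hβ γ' (.tail γ hγ')) γ)

end Worms

/-- Let `A = A₁ ⟨α⟩ A₀ B` with `B` empty or starting with `⟨α⟩`, and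
`A₁, A₀ ∈ 𝕎_{α+1}`.  If `GLP ⊢ A₁ → ⟨α+1⟩A₀` then `GLP ⊢ A ↔ A₁B`. -/
theorem getting_rid_of_small_terms {L : Type} [LinearOrder L] [SuccOrder L]
    (α : L) (A₁ A₀ B : List L)
    (hB : B = [] ∨ ∃ B', B = α :: B')
    (hA₁ : ∀ β ∈ A₁, α < β) (hA₀ : ∀ β ∈ A₀, α < β)
    (h : GLP ((worm A₁).imp (Formula.dia (Order.succ α) (worm A₀)))) :
    GLP ((worm (A₁ ++ α :: A₀ ++ B)).iff (worm (A₁ ++ B))) := by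
  by_cases hmax : IsMax α
  · obtain rfl : A₁ = [] := List.eq_nil_iff_forall_not_mem.2 fun β hβ => hmax.not_lt (hA₁ β hβ)
    exact GLP.of_provable_dia (h.mp' GLP.top_intro) _
  have hBα : ∀ β ∈ B.head?, β ≤ α := by rcases hB with rfl | ⟨B', rfl⟩ <;> simp
  have hB₀ : ∀ β ∈ B.head?, ∀ γ ∈ A₀, β < γ := fun β hβ γ hγ => (hBα β hβ).trans_lt (hA₀ γ hγ)
  have hB₁ : ∀ β ∈ B.head?, ∀ γ ∈ A₁, β < γ := fun β hβ γ hγ => (hBα β hβ).trans_lt (hA₁ γ hγ)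
  have hsplit : GLP ((worm (A₁ ++ B)).imp ((worm A₁).and (worm B))) :=
    GLP.imp_and (worm_append_imp_left A₁ B)
      (worm_append_imp_right fun β hβ γ hγ => (hB₁ β hβ γ hγ).le)
  have hbox : GLP ((worm B).imp (box (Order.succ α) (worm B))) :=
    worm_imp_box_worm fun β hβ => (hBα β hβ).trans_lt (Order.lt_succ_of_not_isMax hmax)
  have hlower : GLP (((worm A₁).and (worm B)).imp (worm (α :: (A₀ ++ B)))) :=
    GLP.imp_trans (GLP.imp_and (GLP.imp_trans (GLP.and_left _ _) h) (GLP.and_right _ _)) <|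
      GLP.imp_trans (GLP.dia_and_of_imp_box hbox (worm A₀)) <|
        GLP.imp_trans (GLP.dia_mono (and_imp_worm_append hB₀) _) (GLP.dia_anti (Order.le_succ α) _)
  rw [List.append_assoc]
  refine GLP.iff_intro (worm_append_mono (worm_append_imp_right (w := α :: A₀) ?_) A₁) ?_
  · rintro β hβ γ (_ | ⟨_, hγ⟩)
    exacts [hBα β hβ, (hB₀ β hβ γ hγ).le]
  · refine GLP.imp_trans (GLP.imp_and (GLP.imp_trans hsplit (GLP.and_left _ _))
      (GLP.imp_trans hsplit hlower)) (and_imp_worm_append ?_)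
    rintro β ⟨⟩ γ hγ
    exact hA₁ γ hγ
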